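/- For every α ≥ 1 there exist n = 3 values 0 < v₁ < v₂ < v₃ and a prior f_𝒟 on them such that no buyer-optimal signaling scheme is α-majorized: for every buyer-optimal signaling scheme Z there exist a signaling scheme Z' and m ∈ (0,1] with α·PF(s_Z, m) < PF(s_{Z'}, m). -/

import Mathlib

open Finset MeasureTheory

namespace PD

noncomputable section

/-- Complementary CDF of a mass function `fS` at value `v i`. -/
def G {n : ℕ} (v fS : Fin n → ℝ) (i : Fin n) : ℝ :=
  ∑ j ∈ Finset.univ.filter (fun j => v i ≤ v j), fS j

/-- A signal is a probability mass function on the values. -/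
def IsSignal {n : ℕ} (fS : Fin n → ℝ) : Prop :=
  (∀ i, 0 ≤ fS i) ∧ ∑ i, fS i = 1

/-- The index of the seller's price: the smallest index maximizing `v i * G i`. -/
def priceIdx {n : ℕ} [NeZero n] (v fS : Fin n → ℝ) : Fin n :=
  (Finset.univ.filter (fun i => ∀ j, v j * G v fS j ≤ v i * G v fS i)).min' (by
    haveI : Nonempty (Fin n) := ⟨⟨0, Nat.pos_of_ne_zero (NeZero.ne n)⟩⟩
    obtain ⟨b, _, hb⟩ := Finset.exists_max_image (Finset.univ : Finset (Fin n))
      (fun i => v i * G v fS i) Finset.univ_nonempty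
    exact ⟨b, Finset.mem_filter.mpr ⟨Finset.mem_univ _, fun j => hb j (Finset.mem_univ _)⟩⟩)

/-- Consumer surplus of value `v i` under signal `fS`. -/
def cs {n : ℕ} [NeZero n] (v fS : Fin n → ℝ) (i : Fin n) : ℝ :=
  if v (priceIdx v fS) ≤ v i then v i - v (priceIdx v fS) else 0

/-- Revenue of a signal: the maximum of `v i * G i`. -/
def revSig {n : ℕ} [NeZero n] (v fS : Fin n → ℝ) : ℝ :=
  Finset.univ.sup' (by
    haveI : Nonempty (Fin n) := ⟨⟨0, Nat.pos_of_ne_zero (NeZero.ne n)⟩⟩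
    exact Finset.univ_nonempty) (fun i => v i * G v fS i)

/-- A signaling scheme for prior mass function `f`. -/
structure Scheme (n : ℕ) (f : Fin n → ℝ) where
  Q : ℕ
  sig : Fin Q → Fin n → ℝ
  wt : Fin Q → ℝ
  sig_isSignal : ∀ q, IsSignal (sig q)
  wt_nonneg : ∀ q, 0 ≤ wt q
  wt_sum : ∑ q, wt q = 1
  bayes : ∀ i, ∑ q, wt q * sig q i = f i

/-- Expected consumer surplus of value `v i` under scheme `Z`. -/
def csZ {n : ℕ} [NeZero n] (v f : Fin n → ℝ) (Z : Scheme n f) (i : Fin n) : ℝ :=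
  ∑ q, cs v (Z.sig q) i * (Z.wt q * Z.sig q i / f i)

/-- Expected revenue of a scheme. -/
def revZ {n : ℕ} [NeZero n] (v : Fin n → ℝ) {f : Fin n → ℝ} (Z : Scheme n f) : ℝ :=
  ∑ q, Z.wt q * revSig v (Z.sig q)

/-- A scheme is efficient if on every positive-weight signal, the smallest value
in the support maximizes `v * G`. -/
def Efficient {n : ℕ} (v : Fin n → ℝ) {f : Fin n → ℝ} (Z : Scheme n f) : Prop :=
  ∀ q, 0 < Z.wt q → ∀ i, (0 < Z.sig q i ∧ ∀ j, 0 < Z.sig q j → i ≤ j) →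
    ∀ j, v j * G v (Z.sig q) j ≤ v i * G v (Z.sig q) i

/-- A scheme is monotone if higher values get (weakly) higher expected surplus. -/
def MonotoneScheme {n : ℕ} [NeZero n] (v f : Fin n → ℝ) (Z : Scheme n f) : Prop :=
  ∀ i j : Fin n, v i < v j → csZ v f Z i ≤ csZ v f Z j

/-- A scheme is buyer-optimal if the total expected consumer surplus equals the
expected value minus the Myerson revenue. -/
def BuyerOptimal {n : ℕ} [NeZero n] (v f : Fin n → ℝ) (Z : Scheme n f) : Prop :=
  ∑ i, f i * csZ v f Z i = (∑ i, f i * v i) - revSig v f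

/-- The surplus-mass step function of a scheme: equal to `csZ i` on the quantile
interval `(F(v_{i-1}), F(v_i)]`. -/
def smf {n : ℕ} [NeZero n] (v f : Fin n → ℝ) (Z : Scheme n f) (x : ℝ) : ℝ :=
  ∑ i, if (∑ j ∈ Finset.univ.filter (fun j => j < i), f j) < x ∧
          x ≤ ∑ j ∈ Finset.univ.filter (fun j => j ≤ i), f j
       then csZ v f Z i else 0

/-- Sorted `m`-prefix sum of `g` on `(0,1]`: the infimum of `∫_T g` over
(measurable) subsets `T` of `(0,1]` of total length `m`. -/
def PF (g : ℝ → ℝ) (m : ℝ) : ℝ :=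
  sInf { r : ℝ | ∃ T : Set ℝ, T ⊆ Set.Ioc 0 1 ∧ MeasurableSet T ∧
    volume T = ENNReal.ofReal m ∧ r = ∫ x in T, g x }

/-- Integration `m`-prefix sum of `g`: `∫₀^m g`. -/
def PFV (g : ℝ → ℝ) (m : ℝ) : ℝ := ∫ x in Set.Ioc (0:ℝ) m, g x

/-- A singleton signal puts all mass on one value. -/
def IsSingleton {n : ℕ} (fS : Fin n → ℝ) : Prop :=
  ∃ i : Fin n, fS = fun j => if j = i then 1 else 0

/-- An equal-revenue binary signal on `v i < v j` puts mass `1 - v i / v j` on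
`v i` and `v i / v j` on `v j`. -/
def IsEqRevBinary {n : ℕ} (v : Fin n → ℝ) (fS : Fin n → ℝ) : Prop :=
  ∃ i j : Fin n, v i < v j ∧
    fS = fun l => if l = i then 1 - v i / v j else if l = j then v i / v j else 0

/-- `i` is the smallest value in the support of `fS`. -/
def MinSupp {n : ℕ} (fS : Fin n → ℝ) (i : Fin n) : Prop :=
  0 < fS i ∧ ∀ j, 0 < fS j → i ≤ j

end

/-! Take values `(t³/16, 1, 1 + t)` with `t = 1/(4α)` and a prior under which the top price
`v₃ = 1 + t` is revenue-optimal. On each signal surplus plus revenue is at most welfare, so a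
buyer-optimal scheme earns at most the Myerson revenue. Every signal earns at least what price
`v₃` earns on it, and these amounts add up to the Myerson revenue; so `v₃` stays optimal on each
signal of the scheme. Then `v₂` only gains surplus from signals priced at `v₁`, and such a signal
keeps `v₃` optimal only with mass at most `t⁴/16` on `v₂`. As `v₁` never gains surplus, the
quantiles up to `F(v₂)` carry total surplus at most `t⁴/16`. A scheme that pools `v₂` with `v₁` and,
separately, with `v₃` gives `v₂` and `v₃` surplus of order `t³` per unit of mass, which beats
`α · t⁴/16 = t³/64`. -/

section Signal

variable {n : ℕ} [NeZero n] {v g : Fin n → ℝ}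

lemma priceIdx_isMax (v g : Fin n → ℝ) (j : Fin n) :
    v j * G v g j ≤ v (priceIdx v g) * G v g (priceIdx v g) := by
  unfold priceIdx
  generalize_proofs h
  exact (Finset.mem_filter.mp (Finset.min'_mem _ h)).2 j

lemma priceIdx_eq {i : Fin n} (hmax : ∀ j, v j * G v g j ≤ v i * G v g i)
    (hlt : ∀ j < i, v j * G v g j < v i * G v g i) : priceIdx v g = i := by
  refine le_antisymm (Finset.min'_le _ _ (by simpa using hmax)) (Finset.le_min' _ _ _ ?_)
  intro k hk
  by_contra! hki
  exact (hlt k hki).not_ge ((Finset.mem_filter.mp hk).2 i)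

lemma le_revSig (v g : Fin n → ℝ) (j : Fin n) : v j * G v g j ≤ revSig v g :=
  Finset.le_sup' (fun i => v i * G v g i) (Finset.mem_univ j)

lemma revSig_eq_of_isMax {i : Fin n} (hmax : ∀ j, v j * G v g j ≤ v i * G v g i) :
    revSig v g = v i * G v g i :=
  le_antisymm (Finset.sup'_le _ _ fun j _ => hmax j) (le_revSig v g i)

lemma revSig_eq_priceIdx (v g : Fin n → ℝ) :
    revSig v g = v (priceIdx v g) * G v g (priceIdx v g) :=
  revSig_eq_of_isMax (priceIdx_isMax v g)

lemma cs_nonneg (v g : Fin n → ℝ) (i : Fin n) : 0 ≤ cs v g i := by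
  unfold cs; split_ifs with h <;> linarith

lemma cs_eq_zero_of_isMin {i : Fin n} (hi : ∀ j, v i ≤ v j) : cs v g i = 0 := by
  unfold cs; split_ifs with h
  · linarith [hi (priceIdx v g)]
  · rfl

lemma sum_cs_mul_le (hv : ∀ i, 0 ≤ v i) (hg : ∀ i, 0 ≤ g i) :
    ∑ i, cs v g i * g i ≤ ∑ i, v i * g i - revSig v g := by
  set p := priceIdx v g
  have hsplit : ∑ i, cs v g i * g i
      = ∑ i ∈ univ.filter (fun i => v p ≤ v i), v i * g i - v p * G v g p := by
    rw [G, Finset.mul_sum, ← Finset.sum_sub_distrib, Finset.sum_filter]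
    exact Finset.sum_congr rfl fun i _ => by unfold cs; split_ifs <;> ring
  rw [hsplit, revSig_eq_priceIdx]
  gcongr
  · exact fun i _ _ => mul_nonneg (hv i) (hg i)
  · exact Finset.subset_univ _

end Signal

section Scheme

variable {n : ℕ} {v f : Fin n → ℝ} (Z : Scheme n f)

lemma G_eq_sum_wt_mul (v : Fin n → ℝ) (k : Fin n) :
    G v f k = ∑ q, Z.wt q * G v (Z.sig q) k := by
  simp only [G, Finset.mul_sum]
  rw [Finset.sum_comm]
  exact Finset.sum_congr rfl fun j _ => (Z.bayes j).symm

lemma sum_wt_mul_welfare (v : Fin n → ℝ) :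
    ∑ q, Z.wt q * ∑ i, v i * Z.sig q i = ∑ i, f i * v i := by
  simp only [Finset.mul_sum, ← Z.bayes, Finset.sum_mul]
  rw [Finset.sum_comm]
  exact Finset.sum_congr rfl fun i _ => Finset.sum_congr rfl fun q _ => by ring

variable [NeZero n]

lemma csZ_nonneg (v : Fin n → ℝ) (hf : ∀ i, 0 ≤ f i) (i : Fin n) : 0 ≤ csZ v f Z i :=
  Finset.sum_nonneg fun q _ => mul_nonneg (cs_nonneg v _ i)
    (div_nonneg (mul_nonneg (Z.wt_nonneg q) ((Z.sig_isSignal q).1 i)) (hf i))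

lemma csZ_eq_zero_of_isMin {i : Fin n} (hi : ∀ j, v i ≤ v j) : csZ v f Z i = 0 :=
  Finset.sum_eq_zero fun q _ => by rw [cs_eq_zero_of_isMin hi, zero_mul]

lemma mul_csZ_eq {i : Fin n} (hfi : f i ≠ 0) :
    f i * csZ v f Z i = ∑ q, Z.wt q * (cs v (Z.sig q) i * Z.sig q i) := by
  rw [csZ, Finset.mul_sum]
  exact Finset.sum_congr rfl fun q _ => by field_simp

lemma mul_csZ_le {i : Fin n} {c : ℝ} (hfi : f i ≠ 0)
    (h : ∀ q, 0 < Z.wt q → cs v (Z.sig q) i * Z.sig q i ≤ c) : f i * csZ v f Z i ≤ c := by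
  calc f i * csZ v f Z i = ∑ q, Z.wt q * (cs v (Z.sig q) i * Z.sig q i) := mul_csZ_eq Z hfi
    _ ≤ ∑ q, Z.wt q * c := Finset.sum_le_sum fun q _ => by
        rcases (Z.wt_nonneg q).eq_or_lt with hq | hq
        · simp [← hq]
        · exact mul_le_mul_of_nonneg_left (h q hq) hq.le
    _ = c := by rw [← Finset.sum_mul, Z.wt_sum, one_mul]

lemma BuyerOptimal.revZ_le (hv : ∀ i, 0 ≤ v i) (hf : ∀ i, f i ≠ 0)
    (hZ : BuyerOptimal v f Z) : revZ v Z ≤ revSig v f := by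
  have hsurplus : ∑ i, f i * csZ v f Z i
      = ∑ q, Z.wt q * ∑ i, cs v (Z.sig q) i * Z.sig q i := by
    simp only [mul_csZ_eq Z (hf _), Finset.mul_sum]
    exact Finset.sum_comm
  have hle : ∑ q, Z.wt q * ∑ i, cs v (Z.sig q) i * Z.sig q i
      ≤ ∑ q, Z.wt q * (∑ i, v i * Z.sig q i - revSig v (Z.sig q)) :=
    Finset.sum_le_sum fun q _ => mul_le_mul_of_nonneg_left
      (sum_cs_mul_le hv (Z.sig_isSignal q).1) (Z.wt_nonneg q)
  simp only [mul_sub, Finset.sum_sub_distrib, sum_wt_mul_welfare] at hle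
  rw [BuyerOptimal] at hZ
  rw [revZ]
  linarith

lemma revSig_sig_eq_of_revZ_le {k : Fin n} (hk : revSig v f = v k * G v f k)
    (hZ : revZ v Z ≤ revSig v f) {q : Fin Z.Q} (hq : 0 < Z.wt q) :
    revSig v (Z.sig q) = v k * G v (Z.sig q) k := by
  have hterm : ∀ q, 0 ≤ Z.wt q * (revSig v (Z.sig q) - v k * G v (Z.sig q) k) :=
    fun q => mul_nonneg (Z.wt_nonneg q) (sub_nonneg.mpr (le_revSig v _ k))
  have hsum : ∑ q, Z.wt q * (revSig v (Z.sig q) - v k * G v (Z.sig q) k) = 0 := by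
    refine le_antisymm ?_ (Finset.sum_nonneg fun q _ => hterm q)
    have hG : ∑ q, Z.wt q * (v k * G v (Z.sig q) k) = v k * G v f k := by
      rw [G_eq_sum_wt_mul Z, Finset.mul_sum]
      exact Finset.sum_congr rfl fun q _ => by ring
    rw [revZ] at hZ
    simp only [mul_sub, Finset.sum_sub_distrib, hG]
    linarith
  have := (Finset.sum_eq_zero_iff_of_nonneg fun q _ => hterm q).mp hsum q (Finset.mem_univ q)
  rcases mul_eq_zero.mp this with h | h
  · exact absurd h hq.ne'
  · linarith

end Scheme

section Quantile

lemma PF_le_PFV {g : ℝ → ℝ} {m : ℝ} (hg : ∀ x, 0 ≤ g x) (hm : m ≤ 1) : PF g m ≤ PFV g m :=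
  csInf_le ⟨0, by rintro _ ⟨T, -, -, -, rfl⟩; exact integral_nonneg hg⟩
    ⟨Set.Ioc 0 m, Set.Ioc_subset_Ioc_right hm, measurableSet_Ioc,
      by rw [Real.volume_Ioc, sub_zero], rfl⟩

lemma le_PF {g : ℝ → ℝ} {m c : ℝ} (hm : m ≤ 1)
    (h : ∀ T ⊆ Set.Ioc 0 1, MeasurableSet T → volume T = ENNReal.ofReal m → c ≤ ∫ x in T, g x) :
    c ≤ PF g m :=
  le_csInf ⟨_, Set.Ioc 0 m, Set.Ioc_subset_Ioc_right hm, measurableSet_Ioc,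
      by rw [Real.volume_Ioc, sub_zero], rfl⟩
    (by rintro _ ⟨T, hT, hTm, hTv, rfl⟩; exact h T hT hTm hTv)

/-- A set of length `m` in `(0, 1]` has length at least `m - a` in `(a, 1]`. -/
lemma mul_sub_le_PF {g : ℝ → ℝ} {κ a m : ℝ} (ha : 0 ≤ a) (hm : m ≤ 1) (hκ : 0 ≤ κ)
    (hg0 : ∀ x, 0 ≤ g x) (hg : IntegrableOn g (Set.Ioc 0 1)) (hκg : ∀ x ∈ Set.Ioc a 1, κ ≤ g x) :
    κ * (m - a) ≤ PF g m := by
  refine le_PF hm fun T hT hTm hTv => ?_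
  have hfin : volume (T ∩ Set.Ioc a 1) ≠ ⊤ :=
    measure_ne_top_of_subset (Set.inter_subset_left.trans hT) (by simp)
  have hlen : m - a ≤ volume.real (T ∩ Set.Ioc a 1) := by
    have hcover : T ⊆ Set.Ioc 0 a ∪ T ∩ Set.Ioc a 1 := fun x hx =>
      (le_or_gt x a).imp (fun hxa => ⟨(hT hx).1, hxa⟩) fun hxa => ⟨hx, hxa, (hT hx).2⟩
    have hT' : m ≤ volume.real T := by
      rw [measureReal_def, hTv, ENNReal.toReal_ofReal']; exact le_max_left m 0
    have := (measureReal_mono hcover (measure_union_ne_top (by simp) hfin)).trans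
      (measureReal_union_le (Set.Ioc 0 a) (T ∩ Set.Ioc a 1))
    rw [Real.volume_real_Ioc_of_le ha] at this
    linarith
  calc κ * (m - a) ≤ κ * volume.real (T ∩ Set.Ioc a 1) := by gcongr
    _ ≤ ∫ x in T ∩ Set.Ioc a 1, g x :=
        setIntegral_ge_of_const_le_real (hTm.inter measurableSet_Ioc) hfin
          (fun x hx => hκg x hx.2) (hg.mono_set (Set.inter_subset_left.trans hT))
    _ ≤ ∫ x in T, g x := setIntegral_mono_set (hg.mono_set hT) (ae_of_all _ fun x => hg0 x)
        (Filter.Eventually.of_forall Set.inter_subset_left)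

variable {n : ℕ} [NeZero n] {v f : Fin n → ℝ} (Z : Scheme n f)

lemma smf_nonneg (hf : ∀ i, 0 ≤ f i) (x : ℝ) : 0 ≤ smf v f Z x :=
  Finset.sum_nonneg fun i _ => by split_ifs; exacts [csZ_nonneg Z v hf i, le_rfl]

lemma integrableOn_smf : IntegrableOn (smf v f Z) (Set.Ioc 0 1) := by
  have : smf v f Z = fun x => ∑ i, (Set.Ioc (∑ j ∈ univ.filter (· < i), f j)
      (∑ j ∈ univ.filter (· ≤ i), f j)).indicator (fun _ => csZ v f Z i) x := by
    funext x
    simp only [smf, Set.indicator_apply, Set.mem_Ioc]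
  rw [this]
  exact integrable_finsetSum _ fun i _ => (integrable_const _).indicator measurableSet_Ioc

lemma smf_eq_of_mem_Ioc (hf : ∀ i, 0 ≤ f i) {i : Fin n} {x : ℝ}
    (hx : x ∈ Set.Ioc (∑ j ∈ univ.filter (· < i), f j) (∑ j ∈ univ.filter (· ≤ i), f j)) :
    smf v f Z x = csZ v f Z i := by
  have mono : ∀ {P Q : Fin n → Prop} [DecidablePred P] [DecidablePred Q], (∀ j, P j → Q j) →
      ∑ j ∈ univ.filter P, f j ≤ ∑ j ∈ univ.filter Q, f j := fun hPQ =>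
    Finset.sum_le_sum_of_subset_of_nonneg (Finset.monotone_filter_right _ fun j _ => hPQ j)
      fun j _ _ => hf j
  rw [smf, Finset.sum_eq_single i, if_pos (Set.mem_Ioc.mp hx)]
  · intro k _ hki
    rw [if_neg]
    rintro ⟨hk1, hk2⟩
    rcases lt_or_gt_of_ne hki with hk | hk
    · linarith [hx.1, mono (P := (· ≤ k)) (Q := (· < i)) fun j hj => lt_of_le_of_lt hj hk]
    · linarith [hx.2, mono (P := (· ≤ i)) (Q := (· < k)) fun j hj => lt_of_le_of_lt hj hk]
  · simp

end Quantile

section ThreeValues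

variable {v f g : Fin 3 → ℝ}

lemma G_three_zero (hv : StrictMono v) (g : Fin 3 → ℝ) : G v g 0 = g 0 + g 1 + g 2 := by
  rw [G, Finset.sum_filter, Fin.sum_univ_three]; simp [hv.le_iff_le]

lemma G_three_one (hv : StrictMono v) (g : Fin 3 → ℝ) : G v g 1 = g 1 + g 2 := by
  rw [G, Finset.sum_filter, Fin.sum_univ_three]; simp [hv.le_iff_le]

lemma G_three_two (hv : StrictMono v) (g : Fin 3 → ℝ) : G v g 2 = g 2 := by
  rw [G, Finset.sum_filter, Fin.sum_univ_three]; simp [hv.le_iff_le]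

lemma cs_one_mul_le_of_revSig_eq (hv : StrictMono v) (hv0 : 0 < v 0) (hg : IsSignal g)
    (htop : revSig v g = v 2 * g 2) : cs v g 1 * g 1 ≤ v 0 * (v 2 - v 1) / v 2 := by
  obtain ⟨hg0, hg1⟩ := hg
  rw [Fin.sum_univ_three] at hg1
  have h01 : v 0 < v 1 := hv (by decide)
  have h12 : v 1 < v 2 := hv (by decide)
  have hbound : 0 ≤ v 0 * (v 2 - v 1) / v 2 := by
    apply div_nonneg <;> nlinarith
  obtain hp | hp | hp : priceIdx v g = 0 ∨ priceIdx v g = 1 ∨ priceIdx v g = 2 := by omega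
  · have hrev := revSig_eq_priceIdx v g
    have hmax := priceIdx_isMax v g 1
    simp only [hp, G_three_zero hv, G_three_one hv, hg1] at hrev hmax
    have hg2 : v 2 * g 2 = v 0 := by linarith
    have hv2 : 0 < v 2 := by linarith
    rw [cs, hp, if_pos h01.le, le_div_iff₀ hv2]
    nlinarith [mul_le_mul_of_nonneg_right hmax hv2.le,
      mul_nonneg (mul_nonneg hv0.le (hg0 1)) hv2.le]
  · simpa [cs, hp] using hbound
  · simpa [cs, hp, h12.not_ge] using hbound

variable (Z : Scheme 3 f) (hf : ∀ i, 0 ≤ f i)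
include hf

lemma smf_three_of_mem_Ioc_zero {x : ℝ} (hx : x ∈ Set.Ioc 0 (f 0)) :
    smf v f Z x = csZ v f Z 0 :=
  smf_eq_of_mem_Ioc Z hf (by simpa [Finset.sum_filter, Fin.sum_univ_three] using hx)

lemma smf_three_of_mem_Ioc_one {x : ℝ} (hx : x ∈ Set.Ioc (f 0) (f 0 + f 1)) :
    smf v f Z x = csZ v f Z 1 :=
  smf_eq_of_mem_Ioc Z hf (by simpa [Finset.sum_filter, Fin.sum_univ_three] using hx)

lemma smf_three_of_mem_Ioc_two {x : ℝ} (hx : x ∈ Set.Ioc (f 0 + f 1) (f 0 + f 1 + f 2)) :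
    smf v f Z x = csZ v f Z 2 :=
  smf_eq_of_mem_Ioc Z hf (by simpa [Finset.sum_filter, Fin.sum_univ_three] using hx)

variable (hsum : ∑ i, f i = 1)
include hsum

lemma PF_smf_three_le :
    PF (smf v f Z) (f 0 + f 1) ≤ f 0 * csZ v f Z 0 + f 1 * csZ v f Z 1 := by
  have hm : f 0 + f 1 ≤ 1 := by rw [Fin.sum_univ_three] at hsum; linarith [hf 2]
  have hsplit := Set.Ioc_union_Ioc_eq_Ioc (hf 0) (le_add_of_nonneg_right (hf 1))
  have hint : IntegrableOn (smf v f Z) (Set.Ioc 0 (f 0) ∪ Set.Ioc (f 0) (f 0 + f 1)) := by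
    rw [hsplit]; exact (integrableOn_smf Z).mono_set (Set.Ioc_subset_Ioc_right hm)
  rw [integrableOn_union] at hint
  refine (PF_le_PFV (smf_nonneg Z hf) hm).trans_eq ?_
  rw [PFV, ← hsplit, setIntegral_union (Set.Ioc_disjoint_Ioc_of_le le_rfl) measurableSet_Ioc
      hint.1 hint.2,
    setIntegral_congr_fun measurableSet_Ioc fun x hx => smf_three_of_mem_Ioc_zero Z hf hx,
    setIntegral_congr_fun measurableSet_Ioc fun x hx => smf_three_of_mem_Ioc_one Z hf hx,
    setIntegral_const, setIntegral_const, Real.volume_real_Ioc_of_le (hf 0),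
    Real.volume_real_Ioc_of_le (le_add_of_nonneg_right (hf 1))]
  simp only [smul_eq_mul]
  ring

lemma min_csZ_mul_le_PF_smf_three :
    min (csZ v f Z 1) (csZ v f Z 2) * f 1 ≤ PF (smf v f Z) (f 0 + f 1) := by
  rw [Fin.sum_univ_three] at hsum
  have h := mul_sub_le_PF (g := smf v f Z) (a := f 0) (m := f 0 + f 1) (hf 0)
    (by linarith [hf 2]) (le_min (csZ_nonneg Z v hf 1) (csZ_nonneg Z v hf 2)) (smf_nonneg Z hf)
    (integrableOn_smf Z) fun x hx => ?_
  · rwa [add_sub_cancel_left] at h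
  · rcases le_or_gt x (f 0 + f 1) with hx1 | hx1
    · rw [smf_three_of_mem_Ioc_one Z hf ⟨hx.1, hx1⟩]; exact min_le_left _ _
    · rw [smf_three_of_mem_Ioc_two Z hf ⟨hx1, hsum ▸ hx.2⟩]; exact min_le_right _ _

end ThreeValues

section Example

noncomputable def vals (t : ℝ) : Fin 3 → ℝ := ![t ^ 3 / 16, 1, 1 + t]

noncomputable def prior (t : ℝ) : Fin 3 → ℝ :=
  ![(1 - t ^ 3 / 16) / 2, t ^ 3 / 32 + t / 8, 1 / 2 - t / 8]

lemma sum_prior (t : ℝ) : ∑ i, prior t i = 1 := by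
  simp [prior, Fin.sum_univ_three]; ring

variable {t : ℝ} (ht : 0 < t)
include ht

lemma vals_pos (i : Fin 3) : 0 < vals t i := by
  fin_cases i <;> simp [vals] <;> positivity

variable (ht4 : t ≤ 1 / 4)
include ht4

lemma pow_three_le_of_le_quarter : t ^ 3 ≤ 1 / 64 := by
  have := pow_le_pow_left₀ ht.le ht4 3
  norm_num at this
  linarith

lemma vals_strictMono : StrictMono (vals t) := by
  have := pow_three_le_of_le_quarter ht ht4
  refine Fin.strictMono_iff_lt_succ.mpr fun i => ?_
  fin_cases i <;> simp [vals] <;> linarith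

lemma prior_pos (i : Fin 3) : 0 < prior t i := by
  have := pow_three_le_of_le_quarter ht ht4
  fin_cases i <;> simp [prior] <;> nlinarith [pow_pos ht 3]

lemma revSig_vals_prior : revSig (vals t) (prior t) = vals t 2 * G (vals t) (prior t) 2 := by
  have hv := vals_strictMono ht ht4
  have := pow_three_le_of_le_quarter ht ht4
  refine revSig_eq_of_isMax fun j => ?_
  obtain rfl | rfl | rfl : j = 0 ∨ j = 1 ∨ j = 2 := by omega
  · rw [G_three_zero hv, G_three_two hv]
    simp [vals, prior]
    nlinarith
  · rw [G_three_one hv, G_three_two hv]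
    simp [vals, prior]
    nlinarith [mul_le_mul_of_nonneg_left ht4 ht.le]
  · exact le_rfl

lemma PF_smf_le_of_buyerOptimal (Z : Scheme 3 (prior t))
    (hZ : BuyerOptimal (vals t) (prior t) Z) :
    PF (smf (vals t) (prior t) Z) (prior t 0 + prior t 1) ≤ t ^ 4 / 16 := by
  have hv := vals_strictMono ht ht4
  have hf := prior_pos ht ht4
  have hrevZ := BuyerOptimal.revZ_le Z (fun i => (vals_pos ht i).le) (fun i => (hf i).ne') hZ
  have hmid : prior t 1 * csZ (vals t) (prior t) Z 1 ≤ t ^ 4 / 16 := by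
    refine mul_csZ_le Z (hf 1).ne' fun q hq => (cs_one_mul_le_of_revSig_eq hv (vals_pos ht 0)
      (Z.sig_isSignal q) ?_).trans ?_
    · rw [revSig_sig_eq_of_revZ_le Z (revSig_vals_prior ht ht4) hrevZ hq, G_three_two hv]
    · simp only [vals, Matrix.cons_val]
      rw [div_le_div_iff₀ (by linarith) (by norm_num)]
      nlinarith [pow_pos ht 4]
  calc PF (smf (vals t) (prior t) Z) (prior t 0 + prior t 1)
      ≤ prior t 0 * csZ (vals t) (prior t) Z 0 + prior t 1 * csZ (vals t) (prior t) Z 1 :=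
        PF_smf_three_le Z (fun i => (hf i).le) (sum_prior t)
    _ ≤ t ^ 4 / 16 := by
        rwa [csZ_eq_zero_of_isMin Z fun j => hv.monotone (Fin.zero_le j), mul_zero, zero_add]

noncomputable def altSig (t : ℝ) : Fin 3 → Fin 3 → ℝ :=
  ![![1 - t ^ 3 / 16, t ^ 3 / 16, 0], ![0, 1 / 2, 1 / 2], ![0, 0, 1]]

noncomputable def altWt (t : ℝ) : Fin 3 → ℝ := ![1 / 2, t / 4, 1 / 2 - t / 4]

noncomputable def altScheme : Scheme 3 (prior t) where
  Q := 3
  sig := altSig t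
  wt := altWt t
  sig_isSignal q := by
    have := pow_three_le_of_le_quarter ht ht4
    refine ⟨fun i => ?_, ?_⟩ <;> fin_cases q
    all_goals try fin_cases i
    all_goals simp [altSig, Fin.sum_univ_three]
    all_goals first | positivity | linarith
  wt_nonneg q := by fin_cases q <;> simp [altWt] <;> linarith
  wt_sum := by simp [altWt, Fin.sum_univ_three]; ring
  bayes i := by fin_cases i <;> simp [altWt, altSig, prior, Fin.sum_univ_three] <;> ring

lemma priceIdx_altSig_zero : priceIdx (vals t) (altSig t 0) = 0 := by
  have hv := vals_strictMono ht ht4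
  have := pow_three_le_of_le_quarter ht ht4
  refine priceIdx_eq (fun j => ?_) fun j hj => absurd hj (Fin.not_lt_zero j)
  obtain rfl | rfl | rfl : j = 0 ∨ j = 1 ∨ j = 2 := by omega
  · exact le_rfl
  · rw [G_three_zero hv, G_three_one hv]; simp [vals, altSig]
  · rw [G_three_zero hv, G_three_two hv]; simp [vals, altSig]; positivity

lemma priceIdx_altSig_one : priceIdx (vals t) (altSig t 1) = 1 := by
  have hv := vals_strictMono ht ht4
  have := pow_three_le_of_le_quarter ht ht4
  refine priceIdx_eq (fun j => ?_) fun j hj => ?_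
  · obtain rfl | rfl | rfl : j = 0 ∨ j = 1 ∨ j = 2 := by omega
    · rw [G_three_zero hv, G_three_one hv]; simp [vals, altSig]; linarith
    · exact le_rfl
    · rw [G_three_one hv, G_three_two hv]; simp [vals, altSig]; linarith
  · obtain rfl : j = 0 := by omega
    rw [G_three_zero hv, G_three_one hv]; simp [vals, altSig]; linarith

lemma priceIdx_altSig_two : priceIdx (vals t) (altSig t 2) = 2 := by
  have hv := vals_strictMono ht ht4
  have := pow_three_le_of_le_quarter ht ht4
  have h0 : vals t 0 * G (vals t) (altSig t 2) 0 < vals t 2 * G (vals t) (altSig t 2) 2 := by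
    rw [G_three_zero hv, G_three_two hv]; simp [vals, altSig]; linarith
  have h1 : vals t 1 * G (vals t) (altSig t 2) 1 < vals t 2 * G (vals t) (altSig t 2) 2 := by
    rw [G_three_one hv, G_three_two hv]; simp [vals, altSig]; linarith
  refine priceIdx_eq (fun j => ?_) fun j hj => ?_
  · obtain rfl | rfl | rfl : j = 0 ∨ j = 1 ∨ j = 2 := by omega
    exacts [h0.le, h1.le, le_rfl]
  · obtain rfl | rfl : j = 0 ∨ j = 1 := by omega
    exacts [h0, h1]

lemma prior_one_mul_csZ_altScheme :
    prior t 1 * csZ (vals t) (prior t) (altScheme ht ht4) 1 = (1 - t ^ 3 / 16) * t ^ 3 / 32 := by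
  have := pow_three_le_of_le_quarter ht ht4
  rw [mul_csZ_eq _ (prior_pos ht ht4 1).ne']
  change ∑ q : Fin 3, altWt t q * (cs (vals t) (altSig t q) 1 * altSig t q 1) = _
  simp only [Fin.sum_univ_three, cs, priceIdx_altSig_zero ht ht4, priceIdx_altSig_one ht ht4]
  rw [if_pos (by simp [vals]; linarith)]
  simp [altSig, altWt, vals]
  ring

lemma prior_two_mul_csZ_altScheme :
    prior t 2 * csZ (vals t) (prior t) (altScheme ht ht4) 2 = t ^ 2 / 8 := by
  rw [mul_csZ_eq _ (prior_pos ht ht4 2).ne']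
  change ∑ q : Fin 3, altWt t q * (cs (vals t) (altSig t q) 2 * altSig t q 2) = _
  simp only [Fin.sum_univ_three, cs, priceIdx_altSig_one ht ht4, priceIdx_altSig_two ht ht4]
  simp [altSig, altWt, vals, ht.le]
  ring

lemma lt_PF_smf_altScheme :
    t ^ 3 / 64 < PF (smf (vals t) (prior t) (altScheme ht ht4)) (prior t 0 + prior t 1) := by
  have hf := prior_pos ht ht4
  have := pow_three_le_of_le_quarter ht ht4
  refine lt_of_lt_of_le ?_ (min_csZ_mul_le_PF_smf_three _ (fun i => (hf i).le) (sum_prior t))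
  rw [min_mul_of_nonneg _ _ (hf 1).le, lt_min_iff, mul_comm]
  refine ⟨by rw [prior_one_mul_csZ_altScheme]; nlinarith [pow_pos ht 3], ?_⟩
  rw [eq_div_of_mul_eq (hf 2).ne' ((mul_comm _ _).trans (prior_two_mul_csZ_altScheme ht ht4)),
    div_mul_eq_mul_div, lt_div_iff₀ (hf 2)]
  simp [prior]
  nlinarith [pow_pos ht 3, pow_pos ht 4]

end Example

theorem stmt17 (α : ℝ) (hα : 1 ≤ α) :
    ∃ (v f : Fin 3 → ℝ), StrictMono v ∧ (∀ i, 0 < v i) ∧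
      (∀ i, 0 < f i) ∧ (∑ i, f i = 1) ∧
      ∀ Z : Scheme 3 f, BuyerOptimal v f Z →
        ∃ (Z' : Scheme 3 f) (m : ℝ), 0 < m ∧ m ≤ 1 ∧
          α * PF (smf v f Z) m < PF (smf v f Z') m := by
  have hα0 : 0 < α := by linarith
  set t := 1 / (4 * α) with htα
  have ht : 0 < t := by positivity
  have ht4 : t ≤ 1 / 4 := by
    rw [htα, div_le_div_iff₀ (by positivity) (by norm_num)]; linarith
  have hαt : α * t = 1 / 4 := by rw [htα]; field_simp
  have hf := prior_pos ht ht4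
  refine ⟨vals t, prior t, vals_strictMono ht ht4, vals_pos ht, hf, sum_prior t,
    fun Z hZ => ⟨altScheme ht ht4, prior t 0 + prior t 1, by linarith [hf 0, hf 1], ?_, ?_⟩⟩
  · linarith [hf 2, (Fin.sum_univ_three (prior t)).symm.trans (sum_prior t)]
  calc α * PF (smf (vals t) (prior t) Z) (prior t 0 + prior t 1)
      ≤ α * (t ^ 4 / 16) := by gcongr; exact PF_smf_le_of_buyerOptimal ht ht4 Z hZ
    _ = t ^ 3 / 64 := by linear_combination t ^ 3 / 16 * hαt
    _ < _ := lt_PF_smf_altScheme ht ht4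

end PD
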